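/- arXiv:2408.06455 — 5 statements merged into one kernel-verified Lean document; each statement's English description precedes it below -/
import Mathlib

section
/- Let V be a finite set with |V| = n ≥ 3, let G be a simple graph on V in which every vertex has degree exactly 2, let c be the number of connected components of G, and let ε ≥ 0. If T is a spanning tree of the complete graph on V whose weight in the (1,2)-metric obtained from G is at most (1 + ε)(n + c − 2), then the number of edges of G that are removed by T (i.e., |E(G) \ E(T)|) is at most c + ε(n + c − 2). -/
open SimpleGraph Finset
open scoped Classical

/-- The weight of the spanning tree `T` of the complete graph on `V` in the
`(1,2)`-metric obtained from `G` : each edge of `T` contributes `1` if it is an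
edge of `G` and `2` otherwise. -/
noncomputable def metricWeight {V : Type*} [Fintype V] (G T : SimpleGraph V) : ℕ :=
  ∑ e ∈ T.edgeFinset, if e ∈ G.edgeSet then 1 else 2

/-- for a graph `G` on `n ≥ 3` vertices all of whose degrees are exactly `2`
with `c` connected components, any spanning tree `T` of the complete graph whose weight in
the `(1,2)`-metric obtained from `G` is at most `(1+ε)(n+c-2)` removes at most
`c + ε(n+c-2)` edges of `G`. -/
theorem stmt_1 {V : Type*} [Fintype V] (n c : ℕ) (hn : 3 ≤ n)
    (hcard : Fintype.card V = n) (G : SimpleGraph V)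
    (hdeg : ∀ v : V, G.degree v = 2)
    (hc : Nat.card G.ConnectedComponent = c)
    (ε : ℝ) (hε : 0 ≤ ε)
    (T : SimpleGraph V) (hT : T.IsTree)
    (hw : (metricWeight G T : ℝ) ≤ (1 + ε) * ((n : ℝ) + c - 2)) :
    ((G.edgeFinset \ T.edgeFinset).card : ℝ) ≤ (c : ℝ) + ε * ((n : ℝ) + c - 2) := by
  -- cardinalities
  have hTcard : T.edgeFinset.card + 1 = n := by
    rw [← hcard]; exact hT.card_edgeFinset
  have hGcard : 2 * G.edgeFinset.card = 2 * n := by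
    rw [← G.sum_degrees_eq_twice_card_edges]
    simp [hdeg, hcard, Finset.sum_const, mul_comm]
  have hGcard' : G.edgeFinset.card = n := by omega
  set a := (T.edgeFinset ∩ G.edgeFinset).card with ha
  set b := (T.edgeFinset \ G.edgeFinset).card with hb
  have hab : a + b = n - 1 := by
    rw [ha, hb, Finset.card_inter_add_card_sdiff]; omega
  -- weight formula
  have hwt : metricWeight G T = T.edgeFinset.card + b := by
    unfold metricWeight
    have : ∀ e ∈ T.edgeFinset, (if e ∈ G.edgeSet then 1 else 2)
        = 1 + (if e ∈ G.edgeFinset then 0 else 1) := by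
      intro e _
      by_cases h : e ∈ G.edgeSet <;> simp [h, SimpleGraph.mem_edgeFinset]
    rw [Finset.sum_congr rfl this, Finset.sum_add_distrib, Finset.sum_const, smul_eq_mul,
      mul_one]
    congr 1
    rw [hb, Finset.sdiff_eq_filter, Finset.card_filter]
    exact (Finset.sum_congr rfl fun e _ => by by_cases h : e ∈ G.edgeFinset <;> simp [h]).symm
  -- removed edges
  have hrem : (G.edgeFinset \ T.edgeFinset).card + a = n := by
    rw [ha, Finset.inter_comm]
    rw [add_comm, Finset.card_inter_add_card_sdiff, hGcard']
  have hrem' : (G.edgeFinset \ T.edgeFinset).card = b + 1 := by omega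
  rw [hwt] at hw
  have hTc : T.edgeFinset.card = n - 1 := by omega
  rw [hTc] at hw
  push_cast at hw
  rw [Nat.cast_sub (by omega)] at hw
  push_cast at hw
  rw [hrem']
  push_cast
  nlinarith [hw]
end

section
/- Let V be a finite set with |V| = n ≥ 2, let G be a simple graph on V in which every vertex has degree at most 2, let c be the number of connected components of G that contain a cycle (equivalently, components with as many edges as vertices), and let ε ≥ 0. If T is a spanning tree of the complete graph on V whose weight in the (1,2)-metric obtained from G is at most (1 + ε/2)·(2(n − 1) − (|E(G)| − c)), then the number of edges of G removed by T satisfies |E(G) \ E(T)| ≤ c + ε(n − 1). -/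
/-! Since `T` is a spanning tree, its weight is `(n - 1) + |E(T) \ E(G)|`, and counting
`E(G) ∪ E(T)` in two ways gives `|E(G) \ E(T)| = |E(G)| - (n - 1) + |E(T) \ E(G)|`.
Substituting the weight bound leaves `|E(G) \ E(T)| ≤ c + ε(n - 1) - (ε/2)(|E(G)| - c)`,
and the last term is nonpositive because every component containing a cycle contains an
edge, so `c ≤ |E(G)|`. -/

open SimpleGraph Finset
open scoped Classical

/-- The number of connected components of `G` that contain a cycle, i.e. whose induced
subgraph is not acyclic. -/
noncomputable def numCycleComponents {V : Type*} (G : SimpleGraph V) : ℕ :=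
  Nat.card {K : G.ConnectedComponent // ¬ (G.induce K.supp).IsAcyclic}

namespace SimpleGraph

variable {V : Type*}

lemma exists_adj_of_not_isAcyclic {G : SimpleGraph V} (h : ¬G.IsAcyclic) :
    ∃ a b, G.Adj a b :=
  ne_bot_iff_exists_adj.mp fun hbot ↦ h (hbot ▸ isAcyclic_bot)

lemma exists_edge_forall_mem_supp_of_not_isAcyclic {G : SimpleGraph V}
    {K : G.ConnectedComponent} (hK : ¬(G.induce K.supp).IsAcyclic) :
    ∃ e : G.edgeSet, ∀ v ∈ (e : Sym2 V), v ∈ K.supp := by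
  obtain ⟨a, b, hab⟩ := exists_adj_of_not_isAcyclic hK
  refine ⟨⟨s(a.1, b.1), hab⟩, fun v hv ↦ ?_⟩
  rcases Sym2.mem_iff.mp hv with rfl | rfl
  exacts [a.2, b.2]

lemma numCycleComponents_le_card_edgeFinset [Fintype V] (G : SimpleGraph V) :
    numCycleComponents G ≤ #G.edgeFinset := by
  choose f hf using fun K : {K : G.ConnectedComponent // ¬(G.induce K.supp).IsAcyclic} ↦
    exists_edge_forall_mem_supp_of_not_isAcyclic K.2
  -- a component is recovered from any endpoint of its chosen edge
  have hinj : Function.Injective f := by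
    intro K₁ K₂ hK
    have h₁ := hf K₁ _ (Sym2.out_fst_mem (f K₁ : Sym2 V))
    have h₂ : (f K₁ : Sym2 V).out.1 ∈ K₂.1.supp :=
      hf K₂ _ (by rw [hK]; exact Sym2.out_fst_mem _)
    rw [ConnectedComponent.mem_supp_iff] at h₁ h₂
    exact Subtype.ext (h₁.symm.trans h₂)
  calc numCycleComponents G ≤ Nat.card G.edgeSet := Nat.card_le_card_of_injective f hinj
    _ = #G.edgeFinset := by rw [Nat.card_eq_fintype_card, card_edgeSet]

lemma metricWeight_eq [Fintype V] (G T : SimpleGraph V) :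
    metricWeight G T = #T.edgeFinset + #(T.edgeFinset \ G.edgeFinset) := by
  have hsplit : ∀ e ∈ T.edgeFinset,
      (if e ∈ G.edgeSet then 1 else 2) = 1 + (if e ∈ G.edgeFinset then 0 else 1) := by
    intro e _
    by_cases h : e ∈ G.edgeSet <;> simp [h]
  rw [metricWeight, sum_congr rfl hsplit, sum_add_distrib, sum_ite, sdiff_eq_filter]
  simp

end SimpleGraph

theorem stmt_3_general {V : Type*} [Fintype V] (n c : ℕ)
    (hcard : Fintype.card V = n) (G : SimpleGraph V)
    (hc : numCycleComponents G = c)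
    (ε : ℝ) (hε : 0 ≤ ε)
    (T : SimpleGraph V) (hT : T.IsTree)
    (hw : (metricWeight G T : ℝ) ≤
      (1 + ε / 2) * (2 * ((n : ℝ) - 1) - ((G.edgeFinset.card : ℝ) - c))) :
    ((G.edgeFinset \ T.edgeFinset).card : ℝ) ≤ (c : ℝ) + ε * ((n : ℝ) - 1) := by
  have htree : (#T.edgeFinset : ℝ) + 1 = n := by
    rw [← hcard]; exact_mod_cast hT.card_edgeFinset
  have hunion : (#(G.edgeFinset \ T.edgeFinset) : ℝ) + #T.edgeFinset
      = #(T.edgeFinset \ G.edgeFinset) + #G.edgeFinset := by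
    rw [← Nat.cast_add, ← Nat.cast_add, card_sdiff_add_card, card_sdiff_add_card, union_comm]
  have hcm : (c : ℝ) ≤ #G.edgeFinset := by
    exact_mod_cast hc ▸ numCycleComponents_le_card_edgeFinset G
  rw [metricWeight_eq, Nat.cast_add] at hw
  linarith [mul_nonneg hε (sub_nonneg.mpr hcm)]

/-- for a graph `G` on `n ≥ 2` vertices all of whose degrees are at most `2`,
letting `c` be the number of connected components containing a cycle and `ε ≥ 0`, any
spanning tree `T` of the complete graph whose weight in the `(1,2)`-metric obtained from
`G` is at most `(1 + ε/2)(2(n-1) - (|E(G)| - c))` removes at most `c + ε(n-1)` edges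
of `G`. -/
theorem stmt_3 {V : Type*} [Fintype V] (n c : ℕ) (hn : 2 ≤ n)
    (hcard : Fintype.card V = n) (G : SimpleGraph V)
    (hdeg : ∀ v : V, G.degree v ≤ 2)
    (hc : numCycleComponents G = c)
    (ε : ℝ) (hε : 0 ≤ ε)
    (T : SimpleGraph V) (hT : T.IsTree)
    (hw : (metricWeight G T : ℝ) ≤
      (1 + ε / 2) * (2 * ((n : ℝ) - 1) - ((G.edgeFinset.card : ℝ) - c))) :
    ((G.edgeFinset \ T.edgeFinset).card : ℝ) ≤ (c : ℝ) + ε * ((n : ℝ) - 1) :=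
  stmt_3_general n c hcard G hc ε hε T hT hw
end

section
/- Let G be a finite simple graph in which every vertex has degree exactly 2, let {u1,v1} and {u2,v2} be edges of G with u1, v1, u2, v2 pairwise distinct and with neither {u1,u2} nor {v1,v2} an edge of G, and let G' be the result of the two-switch on these edges. If u1 and u2 lie in different connected components of G, then every vertex of G' has degree exactly 2, and any two vertices that each lie in the connected component of u1 or of u2 in G lie in one and the same connected component of G'. -/
/-!
In a finite graph whose degrees are all even, no edge `uv` is a bridge: after deleting it, `u`
and `v` are the only vertices of odd degree, and the handshake lemma applied to the component of
`u` forces `v` into it. Since `u1v1` and `u2v2` lie in different components, deleting both keeps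
every vertex reachable from the same vertices as before, and the two-switch then adds the edge
`u1u2` joining the two components. Degrees are preserved since each of `u1, v1, u2, v2` loses
one neighbour and gains another.
-/

open SimpleGraph Finset
open scoped Classical

/-- The result of the two-switch on the edges `{u1,v1}` and `{u2,v2}` of `G`:
these two edges are deleted and the edges `{u1,u2}` and `{v1,v2}` are inserted. -/
def twoSwitch {V : Type*} (G : SimpleGraph V) (u1 v1 u2 v2 : V) : SimpleGraph V :=
  SimpleGraph.fromEdgeSet ((G.edgeSet \ {s(u1, v1), s(u2, v2)}) ∪ {s(u1, u2), s(v1, v2)})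

namespace SimpleGraph

variable {V : Type*}

theorem reachable_le_of_adj_reachable {G H : SimpleGraph V}
    (h : ∀ ⦃a b⦄, G.Adj a b → H.Reachable a b) : G.Reachable ≤ H.Reachable := by
  rw [reachable_eq_reflTransGen, reachable_eq_reflTransGen]
  exact fun x y hxy => hxy.lift' id fun a b hab => (reachable_iff_reflTransGen a b).1 (h hab)

variable [Fintype V] (G : SimpleGraph V) [DecidableRel G.Adj]

theorem exists_ne_reachable_odd_degree {v : V} (hv : Odd (G.degree v)) :
    ∃ w, w ≠ v ∧ G.Reachable v w ∧ Odd (G.degree w) := by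
  let s : Set V := {w | G.Reachable v w}
  have hdeg (w : s) : (G.induce s).degree w = G.degree w :=
    degree_induce_of_neighborSet_subset fun b hb => w.2.trans (Adj.reachable hb)
  obtain ⟨w, hwv, hw⟩ :=
    (G.induce s).exists_ne_odd_degree_of_exists_odd_degree ⟨v, Reachable.refl v⟩ (by rwa [hdeg])
  exact ⟨w, fun h => hwv (Subtype.ext h), w.2, by rwa [hdeg] at hw⟩

theorem degree_deleteEdges_of_forall_notMem {s : Set (Sym2 V)} [DecidablePred (· ∈ s)] {w : V}
    (h : ∀ e ∈ s, w ∉ e) : (G.deleteEdges s).degree w = G.degree w := by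
  simp only [← card_neighborFinset_eq_degree]
  congr 1
  ext b
  simp only [mem_neighborFinset, deleteEdges_adj, and_iff_left_iff_imp]
  exact fun _ hb => h _ hb (Sym2.mem_mk_left w b)

theorem degree_deleteEdges_edge_add_one {u v : V} (h : G.Adj u v) :
    (G.deleteEdges {s(u, v)}).degree u + 1 = G.degree u := by
  have hnbr : (G.deleteEdges {s(u, v)}).neighborFinset u = (G.neighborFinset u).erase v := by
    ext b
    simp only [mem_neighborFinset, deleteEdges_adj, Set.mem_singleton_iff, Finset.mem_erase,
      Sym2.eq_iff]
    grind [G.ne_of_adj]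
  rw [← card_neighborFinset_eq_degree, hnbr, card_erase_add_one ((G.mem_neighborFinset u v).2 h),
    card_neighborFinset_eq_degree]

theorem reachable_deleteEdges_of_even_degree {u v : V} (h : G.Adj u v)
    (heven : ∀ w, G.Reachable u w → Even (G.degree w)) :
    (G.deleteEdges {s(u, v)}).Reachable u v := by
  have hodd : Odd ((G.deleteEdges {s(u, v)}).degree u) := by
    have hu := heven u (Reachable.refl u)
    rwa [← degree_deleteEdges_edge_add_one G h, Nat.even_add_one, Nat.not_even_iff_odd] at hu
  obtain ⟨w, hwu, huw, hw⟩ := exists_ne_reachable_odd_degree (G.deleteEdges {s(u, v)}) hodd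
  obtain rfl : w = v := by
    by_contra hwv
    rw [degree_deleteEdges_of_forall_notMem G (by simp [hwu, hwv])] at hw
    exact Nat.not_even_iff_odd.2 hw (heven w (huw.mono (deleteEdges_le _)))
  exact huw

theorem reachable_deleteEdges_pair_of_even_degree (heven : ∀ w, Even (G.degree w))
    {u1 v1 u2 v2 : V} (h1 : G.Adj u1 v1) (h2 : G.Adj u2 v2) (hcomp : ¬G.Reachable u1 u2) :
    (G.deleteEdges {s(u1, v1), s(u2, v2)}).Reachable u1 v1 := by
  have hv2 : ¬G.Reachable u1 v2 := fun h => hcomp (h.trans h2.symm.reachable)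
  rw [Set.pair_comm, Set.insert_eq, ← deleteEdges_deleteEdges]
  refine reachable_deleteEdges_of_even_degree _ ?_ fun w hw => ?_
  · simp only [deleteEdges_adj, Set.mem_singleton_iff, Sym2.eq_iff]
    exact ⟨h1, by grind [Reachable.refl]⟩
  · have hw : G.Reachable u1 w := hw.mono (deleteEdges_le _)
    rw [degree_deleteEdges_of_forall_notMem G (by grind [Reachable.trans])]
    exact heven w

theorem Reachable.deleteEdges_pair_of_even_degree (heven : ∀ w, Even (G.degree w))
    {u1 v1 u2 v2 : V} (h1 : G.Adj u1 v1) (h2 : G.Adj u2 v2) (hcomp : ¬G.Reachable u1 u2)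
    {x y : V} (hxy : G.Reachable x y) :
    (G.deleteEdges {s(u1, v1), s(u2, v2)}).Reachable x y := by
  refine reachable_le_of_adj_reachable (fun a b hab => ?_) x y hxy
  by_cases he1 : s(a, b) = s(u1, v1)
  · have := G.reachable_deleteEdges_pair_of_even_degree heven h1 h2 hcomp
    rcases Sym2.eq_iff.1 he1 with ⟨rfl, rfl⟩ | ⟨rfl, rfl⟩
    exacts [this, this.symm]
  by_cases he2 : s(a, b) = s(u2, v2)
  · have := G.reachable_deleteEdges_pair_of_even_degree heven h2 h1 (hcomp <| ·.symm)
    rw [Set.pair_comm] at this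
    rcases Sym2.eq_iff.1 he2 with ⟨rfl, rfl⟩ | ⟨rfl, rfl⟩
    exacts [this, this.symm]
  exact Adj.reachable (deleteEdges_adj.2 ⟨hab, by simp [he1, he2]⟩)

end SimpleGraph

section TwoSwitch

variable {V : Type*} (G : SimpleGraph V) (u1 v1 u2 v2 : V)

theorem twoSwitch_comm : twoSwitch G u1 v1 u2 v2 = twoSwitch G u2 v2 u1 v1 := by
  rw [twoSwitch, twoSwitch, Set.pair_comm s(u1, v1), Sym2.eq_swap (a := u2) (b := u1),
    Sym2.eq_swap (a := v2) (b := v1)]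

theorem twoSwitch_swap : twoSwitch G u1 v1 u2 v2 = twoSwitch G v1 u1 v2 u2 := by
  rw [twoSwitch, twoSwitch, Set.pair_comm s(u1, u2), Sym2.eq_swap (a := v1) (b := u1),
    Sym2.eq_swap (a := v2) (b := u2)]

theorem twoSwitch_adj {a b : V} : (twoSwitch G u1 v1 u2 v2).Adj a b ↔
    ((G.Adj a b ∧ s(a, b) ≠ s(u1, v1) ∧ s(a, b) ≠ s(u2, v2)) ∨
      s(a, b) = s(u1, u2) ∨ s(a, b) = s(v1, v2)) ∧ a ≠ b := by
  simp only [twoSwitch, fromEdgeSet_adj, Set.mem_union, Set.mem_sdiff, Set.mem_insert_iff,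
    Set.mem_singleton_iff, mem_edgeSet, not_or]

theorem deleteEdges_le_twoSwitch :
    G.deleteEdges {s(u1, v1), s(u2, v2)} ≤ twoSwitch G u1 v1 u2 v2 := fun a b hab => by
  rw [deleteEdges_adj] at hab
  exact (fromEdgeSet_adj _).2 ⟨Or.inl ⟨hab.1, hab.2⟩, hab.1.ne⟩

variable {u1 v1 u2 v2}

theorem twoSwitch_adj_left (h : u1 ≠ u2) : (twoSwitch G u1 v1 u2 v2).Adj u1 u2 :=
  (fromEdgeSet_adj _).2 ⟨Or.inr (Set.mem_insert _ _), h⟩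

variable [Fintype V]

theorem neighborFinset_twoSwitch_left (h12 : u1 ≠ v1) (h13 : u1 ≠ u2) (h14 : u1 ≠ v2) :
    (twoSwitch G u1 v1 u2 v2).neighborFinset u1 = insert u2 ((G.neighborFinset u1).erase v1) := by
  ext b
  simp only [mem_neighborFinset, twoSwitch_adj, Sym2.eq_iff, Finset.mem_insert, Finset.mem_erase]
  grind [G.ne_of_adj]

theorem neighborFinset_twoSwitch_of_ne {v : V} (h1 : v ≠ u1) (h2 : v ≠ v1) (h3 : v ≠ u2)
    (h4 : v ≠ v2) : (twoSwitch G u1 v1 u2 v2).neighborFinset v = G.neighborFinset v := by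
  ext b
  simp only [mem_neighborFinset, twoSwitch_adj, Sym2.eq_iff]
  grind [G.ne_of_adj]

theorem degree_twoSwitch_left (h : G.Adj u1 v1) (hn : ¬G.Adj u1 u2) (h13 : u1 ≠ u2)
    (h14 : u1 ≠ v2) : (twoSwitch G u1 v1 u2 v2).degree u1 = G.degree u1 := by
  rw [← card_neighborFinset_eq_degree, neighborFinset_twoSwitch_left G h.ne h13 h14,
    card_insert_of_notMem (by simp [hn]), card_erase_add_one ((G.mem_neighborFinset _ _).2 h),
    card_neighborFinset_eq_degree]

theorem degree_twoSwitch (h1 : G.Adj u1 v1) (h2 : G.Adj u2 v2) (h13 : u1 ≠ u2) (h14 : u1 ≠ v2)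
    (h23 : v1 ≠ u2) (h24 : v1 ≠ v2) (hnu : ¬G.Adj u1 u2) (hnv : ¬G.Adj v1 v2) (v : V) :
    (twoSwitch G u1 v1 u2 v2).degree v = G.degree v := by
  by_cases hu1 : v = u1
  · subst hu1
    exact degree_twoSwitch_left G h1 hnu h13 h14
  by_cases hv1 : v = v1
  · subst hv1
    rw [twoSwitch_swap]
    exact degree_twoSwitch_left G h1.symm hnv h24 h23
  by_cases hu2 : v = u2
  · subst hu2
    rw [twoSwitch_comm]
    exact degree_twoSwitch_left G h2 (hnu <| ·.symm) h13.symm h23.symm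
  by_cases hv2 : v = v2
  · subst hv2
    rw [twoSwitch_comm, twoSwitch_swap]
    exact degree_twoSwitch_left G h2.symm (hnv <| ·.symm) h24.symm h14.symm
  simp only [← card_neighborFinset_eq_degree, neighborFinset_twoSwitch_of_ne G hu1 hv1 hu2 hv2]

end TwoSwitch

theorem stmt_4_general {V : Type*} [Fintype V] (G : SimpleGraph V)
    (hdeg : ∀ v : V, G.degree v = 2)
    (u1 v1 u2 v2 : V)
    (h1 : G.Adj u1 v1) (h2 : G.Adj u2 v2)
    (hd13 : u1 ≠ u2) (hd14 : u1 ≠ v2)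
    (hd23 : v1 ≠ u2) (hd24 : v1 ≠ v2)
    (hnu : ¬ G.Adj u1 u2) (hnv : ¬ G.Adj v1 v2)
    (hcomp : ¬ G.Reachable u1 u2) :
    (∀ v : V, (twoSwitch G u1 v1 u2 v2).degree v = 2) ∧
    ∀ x y : V, (G.Reachable u1 x ∨ G.Reachable u2 x) →
      (G.Reachable u1 y ∨ G.Reachable u2 y) →
      (twoSwitch G u1 v1 u2 v2).Reachable x y := by
  refine ⟨fun v => (degree_twoSwitch G h1 h2 hd13 hd14 hd23 hd24 hnu hnv v).trans (hdeg v), ?_⟩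
  have heven (v : V) : Even (G.degree v) := hdeg v ▸ even_two
  have hle := deleteEdges_le_twoSwitch G u1 v1 u2 v2
  have hreach (x : V) (hx : G.Reachable u1 x ∨ G.Reachable u2 x) :
      (twoSwitch G u1 v1 u2 v2).Reachable u1 x := by
    rcases hx with hx | hx
    · exact (hx.deleteEdges_pair_of_even_degree G heven h1 h2 hcomp).mono hle
    · have hx := hx.deleteEdges_pair_of_even_degree G heven h2 h1 (hcomp <| ·.symm)
      rw [Set.pair_comm] at hx
      exact (twoSwitch_adj_left G hd13).reachable.trans (hx.mono hle)
  exact fun x y hx hy => (hreach x hx).symm.trans (hreach y hy)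

/-- two-switch on edges in different components joins the two cycles. -/
theorem stmt_4 {V : Type*} [Fintype V] (G : SimpleGraph V)
    (hdeg : ∀ v : V, G.degree v = 2)
    (u1 v1 u2 v2 : V)
    (h1 : G.Adj u1 v1) (h2 : G.Adj u2 v2)
    (hd12 : u1 ≠ v1) (hd13 : u1 ≠ u2) (hd14 : u1 ≠ v2)
    (hd23 : v1 ≠ u2) (hd24 : v1 ≠ v2) (hd34 : u2 ≠ v2)
    (hnu : ¬ G.Adj u1 u2) (hnv : ¬ G.Adj v1 v2)
    (hcomp : ¬ G.Reachable u1 u2) :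
    (∀ v : V, (twoSwitch G u1 v1 u2 v2).degree v = 2) ∧
    ∀ x y : V, (G.Reachable u1 x ∨ G.Reachable u2 x) →
      (G.Reachable u1 y ∨ G.Reachable u2 y) →
      (twoSwitch G u1 v1 u2 v2).Reachable x y :=
  stmt_4_general G hdeg u1 v1 u2 v2 h1 h2 hd13 hd14 hd23 hd24 hnu hnv hcomp
end

section
/- Let G be a finite connected simple graph on n vertices with edge weights w : E(G) → ℝ, and let T be a spanning tree of G of minimum total weight. Then for every real threshold t, the number of edges of T having weight at most t equals n minus the number of connected components of the spanning subgraph G_{≤t}; equivalently, two vertices lie in the same connected component of the subgraph of T consisting of its edges of weight at most t if and only if they lie in the same connected component of G_{≤t}. -/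
open SimpleGraph Finset
open scoped Classical

/-- The threshold graph `G_{≤ t}`: the spanning subgraph of `G` consisting of the
edges of weight at most `t`. -/
noncomputable def levelGraph {V : Type*} (G : SimpleGraph V) (w : Sym2 V → ℝ) (t : ℝ) :
    SimpleGraph V :=
  SimpleGraph.fromEdgeSet {e ∈ G.edgeSet | w e ≤ t}

/-!
If `T` is a minimum spanning tree, the ends of every edge `ab` of `G` are joined in `T` by a path
of edges of weight at most `w ab`: otherwise a heavier edge `e` on the tree path from `a` to `b`
could be exchanged for `ab`, and `T - e + ab` would be a lighter spanning tree. Hence `T_{≤t}` and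
`G_{≤t}` have the same components. As `T_{≤t}` is a forest, each of its edges joins two distinct
components of the graph formed by the others, so its number of edges is `n` minus its number of
components.
-/

namespace SimpleGraph

variable {V : Type*}

lemma Reachable.of_sup_edge {H : SimpleGraph V} {u v x y : V}
    (h : (H ⊔ edge u v).Reachable x y) :
    H.Reachable x y ∨ (H.Reachable x u ∧ H.Reachable v y) ∨
      (H.Reachable x v ∧ H.Reachable u y) := by
  obtain ⟨p⟩ := h
  induction p with
  | nil => exact .inl .rfl
  | @cons x z y hxz _ ih =>
    rcases hxz with hxz | hxz
    · have hxz := hxz.reachable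
      rcases ih with h | ⟨h₁, h₂⟩ | ⟨h₁, h₂⟩
      · exact .inl (hxz.trans h)
      · exact .inr (.inl ⟨hxz.trans h₁, h₂⟩)
      · exact .inr (.inr ⟨hxz.trans h₁, h₂⟩)
    · rcases (edge_adj _ _ _ _).1 hxz with ⟨⟨rfl, rfl⟩ | ⟨rfl, rfl⟩, -⟩ <;>
        rcases ih with h | ⟨h₁, h₂⟩ | ⟨h₁, h₂⟩
      · exact .inr (.inl ⟨.rfl, h⟩)
      · exact .inl (h₁.symm.trans h₂)
      · exact .inl h₂
      · exact .inr (.inr ⟨.rfl, h⟩)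
      · exact .inl h₂
      · exact .inl (h₁.symm.trans h₂)

lemma card_connectedComponent_sup_edge [Finite V] {H : SimpleGraph V} {u v : V}
    (huv : ¬H.Reachable u v) :
    Nat.card (H ⊔ edge u v).ConnectedComponent + 1 = Nat.card H.ConnectedComponent := by
  let f := ConnectedComponent.map (Hom.ofLE (le_sup_left : H ≤ H ⊔ edge u v))
  let S : Set H.ConnectedComponent := Set.univ \ {H.connectedComponentMk v}
  have hinj : Set.InjOn f S := by
    intro c hc d hd hcd
    induction c using ConnectedComponent.ind with | h x =>
    induction d using ConnectedComponent.ind with | h y =>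
    simp only [S, Set.mem_sdiff, Set.mem_singleton_iff, ConnectedComponent.eq] at hc hd
    rcases (ConnectedComponent.exact hcd).of_sup_edge with h | ⟨-, h⟩ | ⟨h, -⟩
    · exact ConnectedComponent.sound h
    · exact absurd h.symm hd.2
    · exact absurd h hc.2
  have himage : f '' S = Set.univ := by
    refine Set.eq_univ_of_forall fun c => ?_
    induction c using ConnectedComponent.ind with | h x =>
    by_cases hx : H.Reachable x v
    · refine ⟨H.connectedComponentMk u, ⟨trivial, fun h => huv (ConnectedComponent.exact h)⟩, ?_⟩
      exact ConnectedComponent.sound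
        ((edge_adj _ _ _ _).2 ⟨.inl ⟨rfl, rfl⟩, by rintro rfl; exact huv .rfl⟩ |>.reachable.mono
          le_sup_right |>.trans (hx.mono le_sup_left).symm)
    · exact ⟨H.connectedComponentMk x, ⟨trivial, fun h => hx (ConnectedComponent.exact h)⟩, rfl⟩
  rw [← Set.ncard_univ, ← himage, hinj.ncard_image,
    Set.ncard_sdiff_singleton_add_one (Set.mem_univ _), Set.ncard_univ]

lemma card_connectedComponent_bot :
    Nat.card (⊥ : SimpleGraph V).ConnectedComponent = Nat.card V :=
  (Nat.card_eq_of_bijective _ ⟨fun _ _ h => reachable_bot.1 (ConnectedComponent.exact h),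
    Quot.mk_surjective⟩).symm

lemma deleteEdges_sup_edge_of_adj {G : SimpleGraph V} {u v : V} (h : G.Adj u v) :
    G.deleteEdges {s(u, v)} ⊔ edge u v = G := by
  ext x y
  simp only [sup_adj, deleteEdges_adj, Set.mem_singleton_iff, adj_edge]
  constructor
  · rintro (⟨h, -⟩ | ⟨he, hne⟩)
    · exact h
    · exact (adj_congr_of_sym2 _ he).1 h
  · intro hxy
    by_cases he : s(u, v) = s(x, y)
    · exact .inr ⟨he, hxy.ne⟩
    · exact .inl ⟨hxy, fun h => he h.symm⟩

lemma IsAcyclic.card_edgeFinset_add_card_connectedComponent [Fintype V] {F : SimpleGraph V}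
    (hF : F.IsAcyclic) : #F.edgeFinset + Nat.card F.ConnectedComponent = Fintype.card V := by
  induction hn : #F.edgeFinset generalizing F with
  | zero =>
    rw [card_eq_zero, edgeFinset_eq_empty] at hn
    subst hn
    rw [card_connectedComponent_bot, Nat.card_eq_fintype_card, zero_add]
  | succ n ih =>
    obtain ⟨e, he⟩ := card_pos.mp (by omega : 0 < #F.edgeFinset)
    induction e with | h u v =>
    have huv : F.Adj u v := mem_edgeFinset.mp he
    have hF'F : F.deleteEdges {s(u, v)} ≤ F := deleteEdges_le _
    have hF' : F.deleteEdges {s(u, v)} ⊔ edge u v = F := deleteEdges_sup_edge_of_adj huv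
    have hbridge : ¬(F.deleteEdges {s(u, v)}).Reachable u v :=
      isAcyclic_iff_forall_adj_isBridge.mp hF huv
    -- forgetting that `F'` is a `deleteEdges` makes its `edgeFinset` use the classical instance
    generalize F.deleteEdges {s(u, v)} = F' at hF'F hF' hbridge
    have hedges : #F.edgeFinset = #F'.edgeFinset + 1 := by
      convert F'.card_edgeFinset_sup_edge (fun h => hbridge h.reachable) huv.ne using 3
      exact hF'.symm
    have hcomps := card_connectedComponent_sup_edge hbridge
    rw [hF'] at hcomps
    have := ih (F := F') (hF.anti hF'F) (by omega)
    omega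

lemma IsAcyclic.isTree_of_card_edgeFinset [Fintype V] [Nonempty V] {F : SimpleGraph V}
    (hF : F.IsAcyclic) (h : #F.edgeFinset + 1 = Fintype.card V) : F.IsTree := by
  have hcomps := hF.card_edgeFinset_add_card_connectedComponent
  have : Subsingleton F.ConnectedComponent := (Nat.card_eq_one_iff_unique.mp (by omega)).1
  exact ⟨⟨fun x y => ConnectedComponent.exact (Subsingleton.elim _ _)⟩, hF⟩

lemma IsAcyclic.not_reachable_deleteEdges_of_mem_edges {G : SimpleGraph V} (hG : G.IsAcyclic)
    {a b : V} {p : G.Walk a b} (hp : p.IsPath) {e : Sym2 V} (he : e ∈ p.edges) :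
    ¬(G.deleteEdges {e}).Reachable a b := by
  rintro ⟨q⟩
  have hpq : p = (q.mapLe (deleteEdges_le _)).toPath :=
    congrArg Subtype.val ((hG.subsingleton_path a b).elim ⟨p, hp⟩ _)
  have := (q.mapLe _).edges_toPath_subset_edges (hpq ▸ he)
  rw [Walk.edges_mapLe_eq_edges] at this
  simpa using q.edges_subset_edgeSet this

lemma sum_edgeFinset_deleteEdges_sup_edge [Fintype V] {M : Type*} [AddCommMonoid M]
    {G : SimpleGraph V} {e : Sym2 V} {a b : V} (he : e ∈ G.edgeSet)
    (hab : ¬(G.deleteEdges {e}).Reachable a b) (f : Sym2 V → M) :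
    ∑ x ∈ (G.deleteEdges {e} ⊔ edge a b).edgeFinset, f x + f e =
      ∑ x ∈ G.edgeFinset, f x + f s(a, b) := by
  have hne : a ≠ b := by rintro rfl; exact hab .rfl
  have hdelete : ∑ x ∈ (G.deleteEdges {e}).edgeFinset, f x + f e = ∑ x ∈ G.edgeFinset, f x := by
    rw [← sum_erase_add _ _ (mem_edgeFinset.mpr he)]
    congr 2
    ext x
    simp [and_comm]
  rw [edgeFinset_sup_edge _ (fun h => hab h.reachable) hne, sum_cons, add_assoc, hdelete,
    add_comm]

lemma IsTree.isTree_deleteEdges_sup_edge [Fintype V] {T : SimpleGraph V} (hT : T.IsTree)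
    {e : Sym2 V} (he : e ∈ T.edgeSet) {a b : V} (hab : ¬(T.deleteEdges {e}).Reachable a b) :
    (T.deleteEdges {e} ⊔ edge a b).IsTree := by
  have := hT.connected.nonempty
  refine ((hT.isAcyclic.anti (deleteEdges_le _)).sup_edge_of_not_reachable hab)
    |>.isTree_of_card_edgeFinset ?_
  have := sum_edgeFinset_deleteEdges_sup_edge he hab (fun _ => 1)
  simp only [sum_const, smul_eq_mul, mul_one] at this
  convert this.trans hT.card_edgeFinset

lemma reachable_eq_of_le_of_forall_adj {H H' : SimpleGraph V} (hle : H ≤ H')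
    (hadj : ∀ a b, H'.Adj a b → H.Reachable a b) : H.Reachable = H'.Reachable := by
  refine le_antisymm (Reachable.mono' hle) ?_
  rw [reachable_eq_reflTransGen (G := H')]
  exact Relation.reflTransGen_le_of_equivalence_of_le (reachable_is_equivalence _) hadj

lemma card_connectedComponent_eq_of_reachable_eq {H H' : SimpleGraph V}
    (h : H.Reachable = H'.Reachable) :
    Nat.card H.ConnectedComponent = Nat.card H'.ConnectedComponent := by
  unfold ConnectedComponent
  rw [h]

end SimpleGraph

section levelGraph

variable {V : Type*}

lemma levelGraph_adj {G : SimpleGraph V} {w : Sym2 V → ℝ} {t : ℝ} {x y : V} :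
    (levelGraph G w t).Adj x y ↔ G.Adj x y ∧ w s(x, y) ≤ t := by
  simp only [levelGraph, fromEdgeSet_adj, Set.mem_sep_iff, mem_edgeSet]
  exact ⟨fun h => h.1, fun h => ⟨h, h.1.ne⟩⟩

lemma levelGraph_mono {G G' : SimpleGraph V} {w : Sym2 V → ℝ} {t t' : ℝ} (hG : G ≤ G')
    (ht : t ≤ t') : levelGraph G w t ≤ levelGraph G' w t' := fun _ _ h =>
  levelGraph_adj.2 ⟨hG (levelGraph_adj.1 h).1, (levelGraph_adj.1 h).2.trans ht⟩

lemma levelGraph_le (G : SimpleGraph V) (w : Sym2 V → ℝ) (t : ℝ) : levelGraph G w t ≤ G :=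
  fun _ _ h => (levelGraph_adj.1 h).1

lemma levelGraph_eq_deleteEdges (G : SimpleGraph V) (w : Sym2 V → ℝ) (t : ℝ) :
    levelGraph G w t = G.deleteEdges {e | t < w e} := by
  ext x y
  simp [levelGraph_adj]

lemma edgeFinset_levelGraph [Fintype V] (G : SimpleGraph V) (w : Sym2 V → ℝ) (t : ℝ) :
    (levelGraph G w t).edgeFinset = G.edgeFinset.filter (fun e => w e ≤ t) := by
  ext e
  induction e with | h x y => simp [levelGraph_adj]

/-- The cycle property: otherwise an edge of the tree path from `a` to `b` heavier than `s(a, b)`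
could be exchanged for `s(a, b)`, giving a lighter spanning tree. -/
theorem reachable_levelGraph_of_adj [Fintype V] {G T : SimpleGraph V} {w : Sym2 V → ℝ}
    (hTG : T ≤ G) (hT : T.IsTree)
    (hmin : ∀ T' : SimpleGraph V, T' ≤ G → T'.IsTree →
      ∑ e ∈ T.edgeFinset, w e ≤ ∑ e ∈ T'.edgeFinset, w e)
    {a b : V} (hab : G.Adj a b) : (levelGraph T w (w s(a, b))).Reachable a b := by
  by_contra hreach
  obtain ⟨p, hp⟩ := hT.connected.exists_isPath a b
  rw [levelGraph_eq_deleteEdges] at hreach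
  obtain ⟨e, hwe, he⟩ := p.exists_mem_edges_of_not_reachable_deleteEdges hreach
  have hsep := hT.isAcyclic.not_reachable_deleteEdges_of_mem_edges hp he
  have heT := p.edges_subset_edgeSet he
  have hle : T.deleteEdges {e} ⊔ edge a b ≤ G :=
    sup_le ((deleteEdges_le _).trans hTG) (G.edge_le_iff.2 (.inr hab))
  have hexchange := sum_edgeFinset_deleteEdges_sup_edge heT hsep w
  have hminimal : ∑ x ∈ T.edgeFinset, w x ≤
      ∑ x ∈ (T.deleteEdges {e} ⊔ edge a b).edgeFinset, w x := by
    -- the two sides carry different `Fintype` instances on the same edge set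
    convert hmin _ hle (hT.isTree_deleteEdges_sup_edge heT hsep)
  have : w s(a, b) < w e := hwe
  linarith

end levelGraph

theorem stmt_9_general {V : Type*} [Fintype V] (n : ℕ) (hcard : Fintype.card V = n)
    (G : SimpleGraph V) (w : Sym2 V → ℝ)
    (T : SimpleGraph V) (hTG : T ≤ G) (hT : T.IsTree)
    (hmin : ∀ T' : SimpleGraph V, T' ≤ G → T'.IsTree →
      ∑ e ∈ T.edgeFinset, w e ≤ ∑ e ∈ T'.edgeFinset, w e)
    (t : ℝ) :
    (T.edgeFinset.filter (fun e => w e ≤ t)).card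
      = n - Nat.card (levelGraph G w t).ConnectedComponent ∧
    ∀ u v : V, (levelGraph T w t).Reachable u v ↔ (levelGraph G w t).Reachable u v := by
  have hreach : (levelGraph T w t).Reachable = (levelGraph G w t).Reachable :=
    reachable_eq_of_le_of_forall_adj (levelGraph_mono hTG le_rfl) fun a b h =>
      (reachable_levelGraph_of_adj hTG hT hmin (levelGraph_adj.1 h).1).mono
        (levelGraph_mono le_rfl (levelGraph_adj.1 h).2)
  refine ⟨?_, fun u v => by rw [hreach]⟩
  have hforest :=
    (hT.isAcyclic.anti (levelGraph_le T w t)).card_edgeFinset_add_card_connectedComponent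
  rw [edgeFinset_levelGraph, card_connectedComponent_eq_of_reachable_eq hreach] at hforest
  omega

/-- for a minimum spanning tree `T` of a finite connected weighted graph `G`
and any threshold `t`, the number of edges of `T` of weight at most `t` equals `n` minus
the number of connected components of `G_{≤ t}`, and the components of the weight-`≤ t`
part of `T` coincide with those of `G_{≤ t}`. -/
theorem stmt_9 {V : Type*} [Fintype V] (n : ℕ) (hcard : Fintype.card V = n)
    (G : SimpleGraph V) (hG : G.Connected) (w : Sym2 V → ℝ)
    (T : SimpleGraph V) (hTG : T ≤ G) (hT : T.IsTree)
    (hmin : ∀ T' : SimpleGraph V, T' ≤ G → T'.IsTree →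
      ∑ e ∈ T.edgeFinset, w e ≤ ∑ e ∈ T'.edgeFinset, w e)
    (t : ℝ) :
    (T.edgeFinset.filter (fun e => w e ≤ t)).card
      = n - Nat.card (levelGraph G w t).ConnectedComponent ∧
    ∀ u v : V, (levelGraph T w t).Reachable u v ↔ (levelGraph G w t).Reachable u v :=
  stmt_9_general n hcard G w T hTG hT hmin t
end

section
/- Let G be a finite connected simple graph on n vertices with real edge weights w satisfying 1 ≤ w(e) ≤ α^L for every edge e, where α > 1 is a real number and L is a natural number. Let T be a minimum spanning tree of G, and for 0 ≤ k ≤ L let c_k denote the number of connected components of G_{≤ α^k}, and set c_{−1} := n. Then ∑_{k=0}^{L} α^k (c_{k−1} − c_k) ≤ α · ∑_{e ∈ E(T)} w(e). -/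
/-!
Let `h_k` be the number of edges of `T` of weight `> α^k`. Deleting them from `T` leaves a
forest with `h_k + 1` components inside `G_{≤ α^k}`, so `c_k ≤ h_k + 1`; moreover
`n = |E(T)| + 1` and `c_L ≥ 1`. Abel summation turns the left side into `n` plus a
combination of the `c_k` with the nonnegative coefficients `α^{k+1} - α^k`, minus `α^L c_L`,
hence it is at most `∑_{e ∈ T} (1 + ∑_{k < L, α^k < w e} (α^{k+1} - α^k))`. The summand of
`e` equals `α^j` for the least `j` with `w e ≤ α^j` (capped at `L`), so it is at most `α w e`.
-/

open SimpleGraph Finset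
open scoped Classical

namespace SimpleGraph

variable {V : Type*} {H : SimpleGraph V}

lemma Reachable.deleteEdges_singleton_or {x y : V} (h : H.Reachable x y) (u v : V) :
    (H.deleteEdges {s(u, v)}).Reachable x y ∨ (H.deleteEdges {s(u, v)}).Reachable x v ∨
      (H.deleteEdges {s(u, v)}).Reachable y v := by
  by_contra! ⟨hxy, hxv, hyv⟩
  obtain ⟨p, hp⟩ := h.exists_isPath
  exact hp.isTrail.not_mem_edges_of_not_reachable hxv hyv
    (p.mem_edges_of_not_reachable_deleteEdges hxy)

lemma card_connectedComponent_deleteEdges_singleton_le [Finite V] (H : SimpleGraph V)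
    (e : Sym2 V) :
    Nat.card (H.deleteEdges {e}).ConnectedComponent ≤ Nat.card H.ConnectedComponent + 1 := by
  induction e with | h u v =>
  have hinj : Set.InjOn (ConnectedComponent.map (Hom.ofLE (deleteEdges_le {s(u, v)})))
      {(H.deleteEdges {s(u, v)}).connectedComponentMk v}ᶜ := by
    intro C hC D hD hCD
    induction C using ConnectedComponent.ind with | h x =>
    induction D using ConnectedComponent.ind with | h y =>
    simp only [Set.mem_compl_iff, Set.mem_singleton_iff, ConnectedComponent.eq] at hC hD
    simp only [ConnectedComponent.map_mk, Hom.ofLE_apply, ConnectedComponent.eq] at hCD ⊢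
    exact (hCD.deleteEdges_singleton_or u v).resolve_right (by tauto)
  have hle := Set.ncard_le_ncard_of_injOn _ (fun _ _ ↦ Set.mem_univ _) hinj
  rw [Set.ncard_univ] at hle
  have hsplit := Set.ncard_add_ncard_compl {(H.deleteEdges {s(u, v)}).connectedComponentMk v}
  rw [Set.ncard_singleton] at hsplit
  omega

lemma card_connectedComponent_deleteEdges_le [Finite V] (H : SimpleGraph V)
    (s : Finset (Sym2 V)) :
    Nat.card (H.deleteEdges s).ConnectedComponent ≤ Nat.card H.ConnectedComponent + #s := by
  induction s using Finset.induction_on with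
  | empty => simp
  | insert e s he ih =>
    rw [coe_insert, Set.insert_eq, Set.union_comm, ← deleteEdges_deleteEdges,
      card_insert_of_notMem he]
    have := card_connectedComponent_deleteEdges_singleton_le (H.deleteEdges s) e
    omega

lemma Connected.card_connectedComponent (hH : H.Connected) :
    Nat.card H.ConnectedComponent = 1 :=
  Nat.card_eq_one_iff_unique.mpr ⟨hH.preconnected.subsingleton_connectedComponent,
    ⟨H.connectedComponentMk hH.nonempty.some⟩⟩

end SimpleGraph

lemma card_connectedComponent_levelGraph_le {V : Type*} [Fintype V] {G T : SimpleGraph V}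
    (hTG : T ≤ G) (hT : T.Connected) (w : Sym2 V → ℝ) (t : ℝ) :
    Nat.card (levelGraph G w t).ConnectedComponent ≤ #{e ∈ T.edgeFinset | t < w e} + 1 := by
  have hle : T.deleteEdges ↑{e ∈ T.edgeFinset | t < w e} ≤ levelGraph G w t := by
    intro a b hab
    simp only [deleteEdges_adj, coe_filter, mem_edgeFinset, Set.mem_ofPred_eq, mem_edgeSet,
      not_and, not_lt] at hab
    simp only [levelGraph, fromEdgeSet_adj, Set.mem_ofPred_eq, mem_edgeSet]
    exact ⟨⟨hTG hab.1, hab.2 hab.1⟩, hab.1.ne⟩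
  calc Nat.card (levelGraph G w t).ConnectedComponent
      ≤ Nat.card (T.deleteEdges ↑{e ∈ T.edgeFinset | t < w e}).ConnectedComponent :=
        ConnectedComponent.card_le_card_of_le hle
    _ ≤ Nat.card T.ConnectedComponent + #{e ∈ T.edgeFinset | t < w e} :=
        card_connectedComponent_deleteEdges_le T _
    _ = #{e ∈ T.edgeFinset | t < w e} + 1 := by rw [hT.card_connectedComponent, add_comm]

namespace Finset

lemma sum_range_mul_sub_succ {R : Type*} [CommRing R] (a v : ℕ → R) (L : ℕ) :
    ∑ k ∈ range (L + 1), a k * (v k - v (k + 1)) =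
      a 0 * v 0 + ∑ k ∈ range L, (a (k + 1) - a k) * v (k + 1) - a L * v (L + 1) := by
  induction L with
  | zero => simp [mul_sub]
  | succ L ih => rw [sum_range_succ, ih, sum_range_succ]; ring

lemma sum_range_pow_mul_sub_succ_le {α : ℝ} (hα : 1 ≤ α) {v h : ℕ → ℝ} {L : ℕ}
    (hv : ∀ k < L, v (k + 1) ≤ h k) (hvL : 0 ≤ v (L + 1)) :
    ∑ k ∈ range (L + 1), α ^ k * (v k - v (k + 1)) ≤
      v 0 + ∑ k ∈ range L, (α ^ (k + 1) - α ^ k) * h k := by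
  have hmid : ∑ k ∈ range L, (α ^ (k + 1) - α ^ k) * v (k + 1) ≤
      ∑ k ∈ range L, (α ^ (k + 1) - α ^ k) * h k :=
    sum_le_sum fun k hk ↦ mul_le_mul_of_nonneg_left (hv k (mem_range.mp hk))
      (sub_nonneg.mpr (pow_le_pow_right₀ hα k.le_succ))
  have hlast := mul_nonneg (pow_nonneg (zero_le_one.trans hα) L) hvL
  rw [sum_range_mul_sub_succ, pow_zero, one_mul]
  linarith

lemma sum_mul_card_filter {ι κ R : Type*} [CommSemiring R] (s : Finset ι) (t : Finset κ)
    (d : κ → R) (p : κ → ι → Prop) [∀ k, DecidablePred (p k)] :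
    ∑ k ∈ t, d k * #{e ∈ s | p k e} = ∑ e ∈ s, ∑ k ∈ t, if p k e then d k else 0 := by
  rw [sum_comm]
  refine sum_congr rfl fun k _ ↦ ?_
  rw [sum_ite, sum_const_zero, add_zero, sum_const, nsmul_eq_mul, mul_comm]

end Finset

lemma one_add_sum_range_ite_pow_sub_le {α x : ℝ} (hα : 1 ≤ α) (hx : 1 ≤ x) (L : ℕ) :
    1 + ∑ k ∈ range L, (if α ^ k < x then α ^ (k + 1) - α ^ k else 0) ≤ α * x := by
  suffices 1 + ∑ k ∈ range L, (if α ^ k < x then α ^ (k + 1) - α ^ k else 0) ≤ α ^ L ∧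
      1 + ∑ k ∈ range L, (if α ^ k < x then α ^ (k + 1) - α ^ k else 0) ≤ α * x from
    this.2
  induction L with
  | zero =>
    simp only [range_zero, sum_empty, add_zero, pow_zero]
    exact ⟨le_rfl, by nlinarith⟩
  | succ L ih =>
    have hpow : α ^ L ≤ α ^ (L + 1) := pow_le_pow_right₀ hα L.le_succ
    rw [sum_range_succ, ← add_assoc]
    split_ifs with h
    · constructor
      · linarith [ih.1]
      · rw [pow_succ']; nlinarith [ih.1]
    · simp only [add_zero]; exact ⟨ih.1.trans hpow, ih.2⟩

lemma card_add_sum_mul_card_filter_le {ι : Type*} {α : ℝ} (hα : 1 ≤ α) (s : Finset ι)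
    {x : ι → ℝ} (hx : ∀ e ∈ s, 1 ≤ x e) (L : ℕ) :
    #s + ∑ k ∈ range L, (α ^ (k + 1) - α ^ k) * #{e ∈ s | α ^ k < x e} ≤
      α * ∑ e ∈ s, x e := by
  rw [sum_mul_card_filter, card_eq_sum_ones, Nat.cast_sum, ← sum_add_distrib, mul_sum]
  exact sum_le_sum fun e he ↦ by
    simpa using one_add_sum_range_ite_pow_sub_le hα (hx e he) L

theorem stmt_12_general {V : Type*} [Fintype V] (n : ℕ) (hcard : Fintype.card V = n)
    (G : SimpleGraph V) (w : Sym2 V → ℝ)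
    (α : ℝ) (hα : 1 < α) (L : ℕ)
    (hw : ∀ e ∈ G.edgeSet, 1 ≤ w e ∧ w e ≤ α ^ L)
    (T : SimpleGraph V) (hTG : T ≤ G) (hT : T.IsTree)
    (c : ℕ → ℕ)
    (hc : ∀ k ≤ L, c k = Nat.card (levelGraph G w (α ^ k)).ConnectedComponent) :
    ∑ k ∈ Finset.range (L + 1),
        α ^ k * ((if k = 0 then (n : ℝ) else (c (k - 1) : ℝ)) - (c k : ℝ))
      ≤ α * ∑ e ∈ T.edgeFinset, w e := by
  set v : ℕ → ℝ := fun k ↦ (if k = 0 then (n : ℝ) else (c (k - 1) : ℝ)) - 1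
  have hv0 : v 0 = #T.edgeFinset := by
    simp only [v, if_pos, ← hcard, ← hT.card_edgeFinset]; push_cast; ring
  have hv_le (k : ℕ) (hk : k < L) : v (k + 1) ≤ #{e ∈ T.edgeFinset | α ^ k < w e} := by
    have := hc k hk.le ▸ card_connectedComponent_levelGraph_le hTG hT.connected w (α ^ k)
    simp only [v, if_neg k.succ_ne_zero, add_tsub_cancel_right, sub_le_iff_le_add]
    exact_mod_cast this
  have hvL : 0 ≤ v (L + 1) := by
    have := hT.connected.nonempty
    have : 0 < c L := hc L le_rfl ▸ Nat.card_pos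
    simp only [v, if_neg L.succ_ne_zero, add_tsub_cancel_right, sub_nonneg]
    exact_mod_cast this
  calc ∑ k ∈ range (L + 1),
        α ^ k * ((if k = 0 then (n : ℝ) else (c (k - 1) : ℝ)) - (c k : ℝ))
      = ∑ k ∈ range (L + 1), α ^ k * (v k - v (k + 1)) :=
        sum_congr rfl fun k _ ↦ by
          simp only [v, if_neg k.succ_ne_zero, add_tsub_cancel_right]; ring
    _ ≤ #T.edgeFinset +
          ∑ k ∈ range L, (α ^ (k + 1) - α ^ k) * #{e ∈ T.edgeFinset | α ^ k < w e} := by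
        rw [← hv0]; exact sum_range_pow_mul_sub_succ_le hα.le hv_le hvL
    _ ≤ α * ∑ e ∈ T.edgeFinset, w e :=
        card_add_sum_mul_card_filter_le hα.le _
          (fun e he ↦ (hw e (edgeSet_mono hTG (mem_edgeFinset.mp he))).1) L

/-- if all weights lie in `[1, α^L]` and `c k` is the number of connected
components of `G_{≤ α^k}` (with `c_{-1} := n`), then
`∑_{k=0}^{L} α^k (c_{k-1} - c_k) ≤ α ⬝ w(MST)`. -/
theorem stmt_12 {V : Type*} [Fintype V] (n : ℕ) (hcard : Fintype.card V = n)
    (G : SimpleGraph V) (hG : G.Connected) (w : Sym2 V → ℝ)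
    (α : ℝ) (hα : 1 < α) (L : ℕ)
    (hw : ∀ e ∈ G.edgeSet, 1 ≤ w e ∧ w e ≤ α ^ L)
    (T : SimpleGraph V) (hTG : T ≤ G) (hT : T.IsTree)
    (hmin : ∀ T' : SimpleGraph V, T' ≤ G → T'.IsTree →
      ∑ e ∈ T.edgeFinset, w e ≤ ∑ e ∈ T'.edgeFinset, w e)
    (c : ℕ → ℕ)
    (hc : ∀ k ≤ L, c k = Nat.card (levelGraph G w (α ^ k)).ConnectedComponent) :
    ∑ k ∈ Finset.range (L + 1),
        α ^ k * ((if k = 0 then (n : ℝ) else (c (k - 1) : ℝ)) - (c k : ℝ))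
      ≤ α * ∑ e ∈ T.edgeFinset, w e :=
  stmt_12_general n hcard G w α hα L hw T hTG hT c hc
end
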